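/- arXiv:1011.3090 — 4 statements merged into one kernel-verified Lean document; each statement's English description precedes it below -/
import Mathlib

section
/- For x ∈ ℝ_{≥0}^M with at least one x_m > 0 and p > 0, the minimum of ∑_{m=1}^M x_m y_m over y ∈ ℝ_{>0}^M subject to ∑_{m=1}^M y_m^{-p} ≤ 1 equals (∑_{m=1}^M x_m^{p/(1+p)})^{(1+p)/p}. -/
/-!
Write `q = p / (1 + p)`. Since `xₘ^q = (xₘ yₘ)^q (yₘ^{-p})^{1-q}`, Hölder's inequality with
exponents `1/q` and `1/(1-q) = 1 + p` gives `∑ xₘ^q ≤ (∑ xₘ yₘ)^q (∑ yₘ^{-p})^{1-q}`, so the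
claimed value is a lower bound. It is approached by weights `yₘ^{-p}` close to the optimal ones
`xₘ^q / ∑ xₖ^q`: these vanish where `xₘ = 0`, so for `c > 1` we mix them with uniform weights in
proportions `c^{-p}` and `1 - c^{-p}`, which gives a feasible `y` of cost at most `c` times the value.
-/

open Finset Real

theorem sum_rpow_mul_rpow_one_sub_le {ι : Type*} (s : Finset ι) {f g : ι → ℝ} {a : ℝ}
    (hf : ∀ i ∈ s, 0 ≤ f i) (hg : ∀ i ∈ s, 0 ≤ g i) (ha₀ : 0 < a) (ha₁ : a < 1) :
    ∑ i ∈ s, f i ^ a * g i ^ (1 - a) ≤ (∑ i ∈ s, f i) ^ a * (∑ i ∈ s, g i) ^ (1 - a) := by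
  have hb₀ : 1 - a ≠ 0 := by linarith
  have := inner_le_Lp_mul_Lq_of_nonneg s (HolderConjugate.inv_one_sub_inv ha₀ ha₁)
    (f := fun i ↦ f i ^ a) (g := fun i ↦ g i ^ (1 - a))
    (fun i hi ↦ rpow_nonneg (hf i hi) a) (fun i hi ↦ rpow_nonneg (hg i hi) _)
  simpa only [one_div, inv_inv, sum_congr rfl fun i hi ↦ rpow_rpow_inv (hf i hi) ha₀.ne',
    sum_congr rfl fun i hi ↦ rpow_rpow_inv (hg i hi) hb₀] using this

theorem rpow_sum_rpow_le_sum_mul {ι : Type*} (s : Finset ι) {x y : ι → ℝ} {p : ℝ} (hp : 0 < p)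
    (hx : ∀ i ∈ s, 0 ≤ x i) (hy : ∀ i ∈ s, 0 < y i) (hy₁ : ∑ i ∈ s, y i ^ (-p) ≤ 1) :
    (∑ i ∈ s, x i ^ (p / (1 + p))) ^ ((1 + p) / p) ≤ ∑ i ∈ s, x i * y i := by
  set q := p / (1 + p) with hq
  have hq₀ : 0 < q := by positivity
  have hq₁ : q < 1 := (div_lt_one (by linarith)).2 (by linarith)
  have hxy : 0 ≤ ∑ i ∈ s, x i * y i := sum_nonneg fun i hi ↦ mul_nonneg (hx i hi) (hy i hi).le
  have hsplit : ∀ i ∈ s, x i ^ q = (x i * y i) ^ q * (y i ^ (-p)) ^ (1 - q) := fun i hi ↦ by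
    have hp₁ : -p * (1 - q) = -q := by rw [hq]; field_simp; ring
    rw [← rpow_mul (hy i hi).le, hp₁, mul_rpow (hx i hi) (hy i hi).le, mul_assoc,
      ← rpow_add (hy i hi), add_neg_cancel, rpow_zero, mul_one]
  have hS : ∑ i ∈ s, x i ^ q ≤ (∑ i ∈ s, x i * y i) ^ q :=
    calc ∑ i ∈ s, x i ^ q
        = ∑ i ∈ s, (x i * y i) ^ q * (y i ^ (-p)) ^ (1 - q) := sum_congr rfl hsplit
      _ ≤ (∑ i ∈ s, x i * y i) ^ q * (∑ i ∈ s, y i ^ (-p)) ^ (1 - q) :=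
          sum_rpow_mul_rpow_one_sub_le s (fun i hi ↦ mul_nonneg (hx i hi) (hy i hi).le)
            (fun i hi ↦ (rpow_pos_of_pos (hy i hi) _).le) hq₀ hq₁
      _ ≤ (∑ i ∈ s, x i * y i) ^ q :=
          mul_le_of_le_one_right (by positivity)
            (rpow_le_one (sum_nonneg fun i hi ↦ (rpow_pos_of_pos (hy i hi) _).le) hy₁
              (by linarith))
  rw [← inv_div, ← hq]
  calc (∑ i ∈ s, x i ^ q) ^ q⁻¹ ≤ ((∑ i ∈ s, x i * y i) ^ q) ^ q⁻¹ :=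
        rpow_le_rpow (sum_nonneg fun i hi ↦ rpow_nonneg (hx i hi) q) hS (by positivity)
    _ = ∑ i ∈ s, x i * y i := rpow_rpow_inv hxy hq₀.ne'

theorem mul_rpow_neg_inv_le {x w c S p : ℝ} (hp : 0 < p) (hc : 0 < c) (hx : 0 ≤ x)
    (hxS : x ^ (p / (1 + p)) ≤ S) (hw : c ^ (-p) * (x ^ (p / (1 + p)) / S) ≤ w) :
    x * w ^ (-p⁻¹) ≤ c * S ^ p⁻¹ * x ^ (p / (1 + p)) := by
  obtain rfl | hx := hx.eq_or_lt
  · rw [zero_mul, zero_rpow (by positivity), mul_zero]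
  have hS : 0 < S := (rpow_pos_of_pos hx _).trans_le hxS
  have he : 1 + p / (1 + p) * -p⁻¹ = p / (1 + p) := by field_simp; ring
  have hx₁ : x * x ^ (p / (1 + p) * -p⁻¹) = x ^ (p / (1 + p)) := by
    rw [← rpow_one_add' hx.le (by rw [he]; positivity), he]
  calc x * w ^ (-p⁻¹) ≤ x * (c ^ (-p) * (x ^ (p / (1 + p)) / S)) ^ (-p⁻¹) :=
        mul_le_mul_of_nonneg_left (rpow_le_rpow_of_nonpos (by positivity) hw (by simp [hp.le]))
          hx.le
    _ = c * S ^ p⁻¹ * x ^ (p / (1 + p)) := by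
        rw [mul_rpow (by positivity) (by positivity), div_rpow (by positivity) hS.le,
          ← rpow_mul hc.le, ← rpow_mul hx.le, rpow_neg hS.le, div_inv_eq_mul, neg_mul_neg,
          mul_inv_cancel₀ hp.ne', rpow_one, ← hx₁]
        ring

theorem exists_sum_rpow_neg_le_one_sum_mul_le {ι : Type*} [Fintype ι] {x : ι → ℝ} {p c : ℝ}
    (hp : 0 < p) (hx : ∀ i, 0 ≤ x i) (hc : 1 < c) :
    ∃ y : ι → ℝ, (∀ i, 0 < y i) ∧ ∑ i, y i ^ (-p) ≤ 1 ∧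
      ∑ i, x i * y i ≤ c * (∑ i, x i ^ (p / (1 + p))) ^ ((1 + p) / p) := by
  set q := p / (1 + p)
  set S := ∑ i, x i ^ q
  set a := c ^ (-p)
  have hS : 0 ≤ S := sum_nonneg fun i _ ↦ rpow_nonneg (hx i) q
  have ha₀ : 0 ≤ a := by positivity
  have ha₁ : a < 1 := rpow_lt_one_of_one_lt_of_neg hc (by linarith)
  have hε : ∀ i : ι, 0 < (1 - a) * (Fintype.card ι : ℝ)⁻¹ := fun i ↦ by
    have : 0 < Fintype.card ι := Fintype.card_pos_iff.2 ⟨i⟩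
    have : 0 < 1 - a := by linarith
    positivity
  set w : ι → ℝ := fun i ↦ a * (x i ^ q / S) + (1 - a) * (Fintype.card ι : ℝ)⁻¹
  have hw : ∀ i, 0 < w i := fun i ↦
    add_pos_of_nonneg_of_pos (by have := rpow_nonneg (hx i) q; positivity) (hε i)
  refine ⟨fun i ↦ w i ^ (-p⁻¹), fun i ↦ rpow_pos_of_pos (hw i) _, ?_, ?_⟩
  · have hyw : ∀ i, (w i ^ (-p⁻¹)) ^ (-p) = w i := fun i ↦ by
      rw [← rpow_mul (hw i).le, neg_mul_neg, inv_mul_cancel₀ hp.ne', rpow_one]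
    -- `S / S ≤ 1` also covers `S = 0` (every `xᵢ = 0`), where `S / S = 0`.
    simp only [hyw, w, sum_add_distrib, ← mul_sum, ← sum_div, sum_const, card_univ, nsmul_eq_mul]
    calc a * (S / S) + (1 - a) * (Fintype.card ι * (Fintype.card ι : ℝ)⁻¹)
        ≤ a * 1 + (1 - a) * 1 := by
          gcongr
          · exact div_self_le_one S
          · exact mul_inv_le_one
      _ = 1 := by ring
  · have hT : S ^ ((1 + p) / p) = S ^ p⁻¹ * S := by
      rw [← rpow_add_one' hS (by positivity)]
      congr 1
      field_simp
    rw [hT, ← mul_assoc, mul_sum]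
    exact sum_le_sum fun i _ ↦ mul_rpow_neg_inv_le hp (by linarith) (hx i)
      (single_le_sum (fun j _ ↦ rpow_nonneg (hx j) q) (mem_univ i))
      (le_add_of_nonneg_right (hε i).le)

theorem stmt3_general (M : ℕ) (x : Fin M → ℝ) (p : ℝ)
    (hx : ∀ m, 0 ≤ x m) (hp : 0 < p) :
    IsGLB {z : ℝ | ∃ y : Fin M → ℝ, (∀ m, 0 < y m) ∧ (∑ m, (y m) ^ (-p)) ≤ 1 ∧
        z = ∑ m, x m * y m}
      ((∑ m, (x m) ^ (p / (1 + p))) ^ ((1 + p) / p)) := by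
  constructor
  · rintro z ⟨y, hy, hy₁, rfl⟩
    exact rpow_sum_rpow_le_sum_mul univ hp (fun m _ ↦ hx m) (fun m _ ↦ hy m) hy₁
  · intro b hb
    refine (le_iff_forall_one_lt_le_mul₀
      (rpow_nonneg (sum_nonneg fun m _ ↦ rpow_nonneg (hx m) _) _)).2 fun c hc ↦ ?_
    obtain ⟨y, hy, hy₁, hxy⟩ := exists_sum_rpow_neg_le_one_sum_mul_le hp hx hc
    exact (hb ⟨y, hy, hy₁, rfl⟩).trans (mul_comm c _ ▸ hxy)

/-- For nonnegative `x` (not identically zero) and `p > 0`, the infimum of `∑ xₘ yₘ`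
over positive `y` with `∑ yₘ^{-p} ≤ 1` equals `(∑ xₘ^{p/(1+p)})^{(1+p)/p}`. -/
theorem stmt3 (M : ℕ) (x : Fin M → ℝ) (p : ℝ)
    (hx : ∀ m, 0 ≤ x m) (hex : ∃ m, 0 < x m) (hp : 0 < p) :
    IsGLB {z : ℝ | ∃ y : Fin M → ℝ, (∀ m, 0 < y m) ∧ (∑ m, (y m) ^ (-p)) ≤ 1 ∧
        z = ∑ m, x m * y m}
      ((∑ m, (x m) ^ (p / (1 + p))) ^ ((1 + p) / p)) :=
  stmt3_general M x p hx hp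
end

section
/- Let K_1, …, K_M be symmetric positive definite N×N real matrices, d ∈ ℝ_{>0}^M, and f̄ ∈ ℝ^N. Then the minimum of ∑_{m=1}^M f_mᵀ K_m^{-1} f_m / d_m over f_1, …, f_M ∈ ℝ^N subject to ∑_{m=1}^M f_m = f̄ equals f̄ᵀ (∑_{m=1}^M d_m K_m)^{-1} f̄, attained at f_m = d_m K_m (∑_{m'} d_{m'} K_{m'})^{-1} f̄. -/
/-!
With `S = ∑ₘ dₘ Kₘ` and `w = S⁻¹ f̄`, completing the square in each summand gives
`fₘᵀ Kₘ⁻¹ fₘ / dₘ ≥ 2 fₘ ⬝ w - dₘ wᵀ Kₘ w`, with equality exactly at `fₘ = dₘ Kₘ w`.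
Summing over `m` and using `∑ₘ fₘ = f̄ = S w`, the right-hand sides add up to
`2 f̄ ⬝ w - wᵀ S w = f̄ᵀ S⁻¹ f̄`, and the equality choice `fₘ = dₘ Kₘ w` sums to `S w = f̄`.
-/

open Matrix Finset

namespace Matrix

variable {n : Type*} [Fintype n] [DecidableEq n]

theorem smul_mulVec_dotProduct_inv_mulVec_div {𝕜 : Type*} [Field 𝕜] {A : Matrix n n 𝕜}
    (hA : IsUnit A) {c : 𝕜} (hc : c ≠ 0) (w : n → 𝕜) :
    (c • (A *ᵥ w)) ⬝ᵥ (A⁻¹ *ᵥ (c • (A *ᵥ w))) / c = c * (w ⬝ᵥ (A *ᵥ w)) := by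
  rw [mulVec_smul, mulVec_mulVec, nonsing_inv_mul A (A.isUnit_iff_isUnit_det.mp hA), one_mulVec,
    smul_dotProduct, dotProduct_smul, smul_eq_mul, smul_eq_mul, dotProduct_comm]
  field_simp

theorem PosDef.two_mul_dotProduct_sub_le_dotProduct_inv_mulVec_div {A : Matrix n n ℝ}
    (hA : A.PosDef) {c : ℝ} (hc : 0 < c) (f w : n → ℝ) :
    2 * (f ⬝ᵥ w) - c * (w ⬝ᵥ (A *ᵥ w)) ≤ f ⬝ᵥ (A⁻¹ *ᵥ f) / c := by
  set g := c • (A *ᵥ w)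
  have hAinv_g : A⁻¹ *ᵥ g = c • w := by
    rw [mulVec_smul, mulVec_mulVec, nonsing_inv_mul A (A.isUnit_iff_isUnit_det.mp hA.isUnit),
      one_mulVec]
  have hg_Ainv_f : g ⬝ᵥ (A⁻¹ *ᵥ f) = c * (f ⬝ᵥ w) := by
    rw [dotProduct_mulVec, ← mulVec_transpose, ← conjTranspose_eq_transpose_of_trivial, hA.inv.1,
      dotProduct_comm, hAinv_g, dotProduct_smul, smul_eq_mul]
  have hsquare : 0 ≤ (f - g) ⬝ᵥ (A⁻¹ *ᵥ (f - g)) := by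
    simpa using hA.inv.posSemidef.dotProduct_mulVec_nonneg (f - g)
  have hexpand : (f - g) ⬝ᵥ (A⁻¹ *ᵥ (f - g))
      = f ⬝ᵥ (A⁻¹ *ᵥ f) - 2 * c * (f ⬝ᵥ w) + c * (c * (w ⬝ᵥ (A *ᵥ w))) := by
    simp only [mulVec_sub, dotProduct_sub, sub_dotProduct, hAinv_g, hg_Ainv_f, dotProduct_smul,
      smul_eq_mul, g, smul_dotProduct, dotProduct_comm (A *ᵥ w) w]
    ring
  rw [le_div_iff₀ hc]
  nlinarith

end Matrix

/-- Finite-dimensional combined-kernel norm identity: for symmetric positive definite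
`K₁,…,K_M`, positive weights `d`, and `f̄ ∈ ℝ^N`, the minimum of
`∑ₘ fₘᵀ Kₘ⁻¹ fₘ / dₘ` over decompositions `∑ₘ fₘ = f̄` is
`f̄ᵀ (∑ₘ dₘ Kₘ)⁻¹ f̄`, attained at `fₘ = dₘ Kₘ (∑ₘ' dₘ' Kₘ')⁻¹ f̄`. -/
theorem stmt9 (N M : ℕ) (hM : 0 < M) (K : Fin M → Matrix (Fin N) (Fin N) ℝ)
    (hK : ∀ m, (K m).PosDef) (d : Fin M → ℝ) (hd : ∀ m, 0 < d m)
    (fbar : Fin N → ℝ) :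
    IsLeast {z : ℝ | ∃ f : Fin M → (Fin N → ℝ), (∑ m, f m) = fbar ∧
        z = ∑ m, (f m) ⬝ᵥ ((K m)⁻¹ *ᵥ f m) / d m}
      (fbar ⬝ᵥ ((∑ m, d m • K m)⁻¹ *ᵥ fbar))
    ∧ (∑ m, d m • (K m *ᵥ ((∑ m', d m' • K m')⁻¹ *ᵥ fbar))) = fbar
    ∧ (∑ m, (d m • (K m *ᵥ ((∑ m', d m' • K m')⁻¹ *ᵥ fbar))) ⬝ᵥ
          ((K m)⁻¹ *ᵥ (d m • (K m *ᵥ ((∑ m', d m' • K m')⁻¹ *ᵥ fbar)))) / d m)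
        = fbar ⬝ᵥ ((∑ m, d m • K m)⁻¹ *ᵥ fbar) := by
  set S := ∑ m, d m • K m
  have hS : S.PosDef := posDef_sum ⟨⟨0, hM⟩, mem_univ _⟩ fun m _ => (hK m).smul (hd m)
  set w := S⁻¹ *ᵥ fbar
  have hSw : S *ᵥ w = fbar := by
    rw [mulVec_mulVec, mul_nonsing_inv S (S.isUnit_iff_isUnit_det.mp hS.isUnit), one_mulVec]
  have hquad : w ⬝ᵥ (S *ᵥ w) = ∑ m, d m * (w ⬝ᵥ (K m *ᵥ w)) := by
    simp only [S, sum_mulVec, dotProduct_sum, smul_mulVec, dotProduct_smul, smul_eq_mul]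
  have hrecon : ∑ m, d m • (K m *ᵥ w) = fbar := by
    simp only [← hSw, S, sum_mulVec, smul_mulVec]
  have hvalue : ∑ m, (d m • (K m *ᵥ w)) ⬝ᵥ ((K m)⁻¹ *ᵥ (d m • (K m *ᵥ w))) / d m
      = fbar ⬝ᵥ w := by
    rw [sum_congr rfl fun m _ => smul_mulVec_dotProduct_inv_mulVec_div (hK m).isUnit (hd m).ne' w,
      ← hquad, hSw, dotProduct_comm]
  refine ⟨⟨⟨_, hrecon, hvalue.symm⟩, ?_⟩, hrecon, hvalue⟩
  rintro _ ⟨f, hf, rfl⟩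
  calc fbar ⬝ᵥ w = 2 * (fbar ⬝ᵥ w) - w ⬝ᵥ (S *ᵥ w) := by
        rw [hSw, dotProduct_comm w]; ring
    _ = ∑ m, (2 * (f m ⬝ᵥ w) - d m * (w ⬝ᵥ (K m *ᵥ w))) := by
        rw [hquad, sum_sub_distrib, ← mul_sum, ← sum_dotProduct, hf]
    _ ≤ _ := sum_le_sum fun m _ =>
        (hK m).two_mul_dotProduct_sub_le_dotProduct_inv_mulVec_div (hd m) _ _
end

section
/- Let K_1, …, K_M be symmetric positive semidefinite N×N matrices, σ > 0, and x ∈ ℝ_{≥0}^M. Then the function η ↦ ∑_{m=1}^M x_m e^{−η_m} + log det(σ² I_N + ∑_{m=1}^M e^{η_m} K_m) is convex on ℝ^M. -/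
/-!
Write `Kₘ = Bₘᵀ Bₘ`. Then `σ²I + ∑ₘ e^{ηₘ} Kₘ = Cᵀ D(η) C`, where `C` stacks `I` and the `Bₘ`
and `D(η)` is diagonal with entries `σ²` and `e^{ηₘ}`. Expanding the determinant column by column
and averaging over the permutations of the columns gives
`N! · det (Cᵀ D C) = ∑_f (∏ₖ D_{f k}) · det (C_f)²`, a polynomial in the `e^{ηₘ}` with
nonnegative coefficients whose monomials are log-affine in `η`. By Hölder's inequality a
nonnegative combination of log-convex functions is log-convex, so the log-determinant is convex;
so is `∑ₘ xₘ e^{-ηₘ}`.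
-/

open Matrix Finset Real Equiv

namespace Matrix

section

variable {R n J : Type*} [CommRing R]

theorem transpose_mul_diagonal_mul_apply [Fintype J] [DecidableEq J] (C : Matrix J n R)
    (d : J → R) (a b : n) :
    (Cᵀ * diagonal d * C) a b = ∑ j, d j * C j a * C j b := by
  simp only [mul_apply, diagonal_apply, transpose_apply, mul_ite, mul_zero, sum_ite_eq',
    mem_univ, if_true]
  exact sum_congr rfl fun j _ => by ring

theorem sum_smul_transpose_mul_self_eq {ι r : Type*} [Fintype ι] [DecidableEq ι] [Fintype r]
    [DecidableEq r] (B : ι → Matrix r n R) (t : ι → R) :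
    ∑ i, t i • ((B i)ᵀ * B i) =
      (of (Function.uncurry B))ᵀ * diagonal (fun p : ι × r => t p.1) *
        of (Function.uncurry B) := by
  ext a b
  rw [transpose_mul_diagonal_mul_apply, Fintype.sum_prod_type]
  simp only [sum_apply, smul_apply, smul_eq_mul, mul_apply, transpose_apply, of_apply,
    mul_sum, mul_assoc]
  rfl

variable [Fintype n] [DecidableEq n]

theorem sum_perm_prod_mul_det_submatrix (C : Matrix J n R) (f : n → J) :
    ∑ σ : Perm n, (∏ k, C (f (σ k)) k) * (C.submatrix (f ∘ σ) id).det =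
      (C.submatrix f id).det ^ 2 := by
  have hperm (σ : Perm n) : C.submatrix (f ∘ σ) id = (C.submatrix f id).submatrix σ id := rfl
  simp only [hperm, det_permute]
  rw [sq, det_apply' (C.submatrix f id), sum_mul]
  refine sum_congr rfl fun σ _ => ?_
  simp only [submatrix_apply, id]
  ring

section

variable [Fintype J] [DecidableEq J]

theorem det_transpose_mul_diagonal_mul_eq_sum (C : Matrix J n R) (d : J → R) :
    (Cᵀ * diagonal d * C).det =
      ∑ f : n → J, (∏ k, d (f k)) * ((∏ k, C (f k) k) * (C.submatrix f id).det) := by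
  rw [det_apply']
  simp only [transpose_mul_diagonal_mul_apply, prod_univ_sum, Fintype.piFinset_univ, mul_sum]
  rw [sum_comm]
  refine sum_congr rfl fun f _ => ?_
  rw [← det_transpose, det_apply', mul_sum, mul_sum]
  refine sum_congr rfl fun σ _ => ?_
  simp only [transpose_apply, submatrix_apply, id, prod_mul_distrib]
  ring

theorem factorial_mul_det_transpose_mul_diagonal_mul (C : Matrix J n R) (d : J → R) :
    ((Fintype.card n).factorial : R) * (Cᵀ * diagonal d * C).det =
      ∑ f : n → J, (∏ k, d (f k)) * (C.submatrix f id).det ^ 2 := by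
  set a : (n → J) → R := fun f => (∏ k, C (f k) k) * (C.submatrix f id).det
  have hreindex (σ : Perm n) : ∑ f : n → J, (∏ k, d (f k)) * a f =
      ∑ f : n → J, (∏ k, d (f k)) * a (f ∘ σ) := by
    rw [← (σ.symm.arrowCongr (Equiv.refl J)).sum_comp]
    refine sum_congr rfl fun f _ => ?_
    exact congrArg (· * a (f ∘ σ)) (Equiv.prod_comp σ fun k => d (f k))
  calc ((Fintype.card n).factorial : R) * (Cᵀ * diagonal d * C).det
      = ∑ σ : Perm n, ∑ f : n → J, (∏ k, d (f k)) * a (f ∘ σ) := by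
        rw [det_transpose_mul_diagonal_mul_eq_sum, ← Fintype.card_perm, ← nsmul_eq_mul,
          ← card_univ, ← sum_const]
        exact sum_congr rfl fun σ _ => hreindex σ
    _ = ∑ f : n → J, (∏ k, d (f k)) * (C.submatrix f id).det ^ 2 := by
        rw [sum_comm]
        simp only [← mul_sum, a, ← sum_perm_prod_mul_det_submatrix C]
        rfl

end

theorem factorial_mul_det_smul_one_add_sum_smul_transpose_mul_self {ι : Type*} [Fintype ι]
    [DecidableEq ι] (s : R) (u : ι → R) (B : ι → Matrix n n R) :
    ((Fintype.card n).factorial : R) * (s • (1 : Matrix n n R) + ∑ i, u i • ((B i)ᵀ * B i)).det =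
      ∑ f : n → Option ι × n, (∏ k, (f k).1.elim s u) *
        ((of fun p k => (p.1.elim 1 B : Matrix n n R) p.2 k).submatrix f id).det ^ 2 := by
  have hsum : s • (1 : Matrix n n R) + ∑ i, u i • ((B i)ᵀ * B i) =
      ∑ o : Option ι, o.elim s u • ((o.elim 1 B : Matrix n n R)ᵀ * o.elim 1 B) := by
    simp [Fintype.sum_option]
  rw [hsum, sum_smul_transpose_mul_self_eq, factorial_mul_det_transpose_mul_diagonal_mul]
  rfl

end

open scoped ComplexOrder MatrixOrder in
theorem PosSemidef.exists_eq_conjTranspose_mul_self {𝕜 n : Type*} [RCLike 𝕜] [Fintype n]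
    [DecidableEq n] {K : Matrix n n 𝕜} (hK : K.PosSemidef) : ∃ B : Matrix n n 𝕜, K = Bᴴ * B :=
  CStarAlgebra.nonneg_iff_eq_star_mul_self.mp hK.nonneg

end Matrix

theorem convexOn_sum {𝕜 E β ι : Type*} [Semiring 𝕜] [PartialOrder 𝕜] [AddCommMonoid E]
    [AddCommMonoid β] [PartialOrder β] [IsOrderedAddMonoid β] [SMul 𝕜 E] [Module 𝕜 β]
    {s : Set E} {t : Finset ι} {f : ι → E → β} (hs : Convex 𝕜 s)
    (hf : ∀ i ∈ t, ConvexOn 𝕜 s (f i)) : ConvexOn 𝕜 s fun x => ∑ i ∈ t, f i x := by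
  classical
  induction t using Finset.induction_on with
  | empty => simpa using convexOn_const (0 : β) hs
  | insert i t hi ih =>
    simp_rw [sum_insert hi]
    exact (hf i (mem_insert_self i t)).add (ih fun j hj => hf j (mem_insert_of_mem hj))

theorem sum_mul_rpow_mul_rpow_le {ι : Type*} (s : Finset ι) {c p q : ι → ℝ}
    (hc : ∀ i, 0 ≤ c i) (hp : ∀ i, 0 ≤ p i) (hq : ∀ i, 0 ≤ q i) {a b : ℝ} (ha : 0 < a)
    (hb : 0 < b) (hab : a + b = 1) :
    ∑ i ∈ s, c i * (p i ^ a * q i ^ b) ≤ (∑ i ∈ s, c i * p i) ^ a * (∑ i ∈ s, c i * q i) ^ b := by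
  have hcp i : 0 ≤ c i * p i := mul_nonneg (hc i) (hp i)
  have hcq i : 0 ≤ c i * q i := mul_nonneg (hc i) (hq i)
  have key i : c i * (p i ^ a * q i ^ b) = (c i * p i) ^ a * (c i * q i) ^ b := by
    rw [mul_rpow (hc i) (hp i), mul_rpow (hc i) (hq i), mul_mul_mul_comm,
      ← rpow_add' (hc i) (by simp [hab]), hab, rpow_one]
  simpa [key, rpow_rpow_inv, (hcp _), (hcq _), ha.ne', hb.ne'] using
    inner_le_Lp_mul_Lq_of_nonneg s (.inv_inv ha hb hab)
      (fun i _ => rpow_nonneg (hcp i) a) (fun i _ => rpow_nonneg (hcq i) b)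

theorem convexOn_log_sum_mul {ι E : Type*} [Fintype ι] [AddCommGroup E] [Module ℝ E]
    {s : Set E} {c : ι → ℝ} {g : ι → E → ℝ} (hs : Convex ℝ s) (hc : ∀ i, 0 ≤ c i)
    (hg : ∀ i, ∀ x ∈ s, 0 < g i x) (hlog : ∀ i, ConvexOn ℝ s fun x => log (g i x)) :
    ConvexOn ℝ s fun x => log (∑ i, c i * g i x) := by
  by_cases hc0 : ∀ i, c i = 0
  · simpa [hc0] using convexOn_const (0 : ℝ) hs
  obtain ⟨i₀, hi₀⟩ := not_forall.mp hc0
  have hsum_pos : ∀ x ∈ s, 0 < ∑ i, c i * g i x := fun x hx =>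
    sum_pos' (fun i _ => mul_nonneg (hc i) (hg i x hx).le)
      ⟨i₀, mem_univ _, mul_pos ((hc i₀).lt_of_ne' hi₀) (hg i₀ x hx)⟩
  refine convexOn_iff_forall_pos.mpr ⟨hs, fun x hx y hy a b ha hb hab => ?_⟩
  have hxy : a • x + b • y ∈ s := hs hx hy ha.le hb.le hab
  have hg_le i : g i (a • x + b • y) ≤ g i x ^ a * g i y ^ b := by
    rw [← log_le_log_iff (hg i _ hxy) (by have := hg i x hx; have := hg i y hy; positivity),
      log_mul (rpow_pos_of_pos (hg i x hx) a).ne' (rpow_pos_of_pos (hg i y hy) b).ne',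
      log_rpow (hg i x hx), log_rpow (hg i y hy)]
    exact (hlog i).2 hx hy ha.le hb.le hab
  have hsum_le : ∑ i, c i * g i (a • x + b • y) ≤
      (∑ i, c i * g i x) ^ a * (∑ i, c i * g i y) ^ b :=
    (sum_le_sum fun i _ => mul_le_mul_of_nonneg_left (hg_le i) (hc i)).trans
      (sum_mul_rpow_mul_rpow_le _ hc (fun i => (hg i x hx).le) (fun i => (hg i y hy).le) ha hb hab)
  calc log (∑ i, c i * g i (a • x + b • y))
      ≤ log ((∑ i, c i * g i x) ^ a * (∑ i, c i * g i y) ^ b) :=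
        log_le_log (hsum_pos _ hxy) hsum_le
    _ = a • log (∑ i, c i * g i x) + b • log (∑ i, c i * g i y) := by
        rw [log_mul (rpow_pos_of_pos (hsum_pos x hx) a).ne' (rpow_pos_of_pos (hsum_pos y hy) b).ne',
          log_rpow (hsum_pos x hx), log_rpow (hsum_pos y hy), smul_eq_mul, smul_eq_mul]

theorem convexOn_log_prod {κ E : Type*} [AddCommGroup E] [Module ℝ E] {s : Set E}
    {t : Finset κ} {g : κ → E → ℝ} (hs : Convex ℝ s) (hg : ∀ i ∈ t, ∀ x ∈ s, 0 < g i x)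
    (hlog : ∀ i ∈ t, ConvexOn ℝ s fun x => log (g i x)) :
    ConvexOn ℝ s fun x => log (∏ i ∈ t, g i x) := by
  refine (convexOn_sum hs hlog).congr fun x hx => ?_
  exact (log_prod fun i hi => (hg i hi x hx).ne').symm

/-- Convexity of the reparameterized marginal-likelihood objective:
`η ↦ ∑ₘ xₘ e^{−ηₘ} + log det(σ²I + ∑ₘ e^{ηₘ} Kₘ)` is convex on `ℝ^M`
for PSD `Kₘ`, `σ > 0`, and `x ≥ 0`. -/
theorem stmt15 (N M : ℕ) (K : Fin M → Matrix (Fin N) (Fin N) ℝ)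
    (hK : ∀ m, (K m).PosSemidef) (σ : ℝ) (hσ : 0 < σ)
    (x : Fin M → ℝ) (hx : ∀ m, 0 ≤ x m) :
    ConvexOn ℝ Set.univ (fun η : Fin M → ℝ =>
      (∑ m, x m * Real.exp (-η m)) +
      Real.log (Matrix.det
        (σ ^ 2 • (1 : Matrix (Fin N) (Fin N) ℝ) + ∑ m, Real.exp (η m) • K m))) := by
  choose B hB using fun m => (hK m).exists_eq_conjTranspose_mul_self
  let w : Option (Fin M) → (Fin M → ℝ) → ℝ := fun o η => o.elim (σ ^ 2) fun m => exp (η m)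
  have hw_pos (o) (η) : 0 < w o η := by
    cases o <;> simp only [w, Option.elim] <;> positivity
  have hw_log (o) : ConvexOn ℝ Set.univ fun η => log (w o η) := by
    cases o with
    | none => exact convexOn_const (log (σ ^ 2)) convex_univ
    | some m => simpa [w] using (LinearMap.proj m : (Fin M → ℝ) →ₗ[ℝ] ℝ).convexOn convex_univ
  let C : Matrix (Option (Fin M) × Fin N) (Fin N) ℝ := of fun p k => (p.1.elim 1 B) p.2 k
  have hdet (η) : (σ ^ 2 • (1 : Matrix (Fin N) (Fin N) ℝ) + ∑ m, exp (η m) • K m).det =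
      ∑ f : Fin N → Option (Fin M) × Fin N,
        ((C.submatrix f id).det ^ 2 / N.factorial) * ∏ k, w (f k).1 η := by
    have h :=
      factorial_mul_det_smul_one_add_sum_smul_transpose_mul_self (σ ^ 2) (fun m => exp (η m)) B
    simp only [Fintype.card_fin, ← conjTranspose_eq_transpose_of_trivial, ← hB] at h
    rw [← mul_right_inj' (by positivity : (N.factorial : ℝ) ≠ 0), h, mul_sum]
    exact sum_congr rfl fun f _ => by field_simp; exact mul_comm _ _
  refine (convexOn_sum convex_univ fun m _ => ?_).add ?_
  · simpa using
      (convexOn_exp.comp_linearMap (-LinearMap.proj m : (Fin M → ℝ) →ₗ[ℝ] ℝ)).smul (hx m)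
  · simp_rw [hdet]
    exact convexOn_log_sum_mul convex_univ (fun f => by positivity)
      (fun f η _ => prod_pos fun k _ => hw_pos _ η)
      fun f => convexOn_log_prod convex_univ (fun k _ η _ => hw_pos _ η) fun k _ => hw_log _
end

section
/- Let K_1, …, K_M be symmetric positive definite N×N matrices, σ > 0, y ∈ ℝ^N, and d ∈ ℝ_{>0}^M. Then min over (f_1,…,f_M) ∈ (ℝ^N)^M of (1/(2σ²))‖y − ∑_m f_m‖² + (1/2)∑_m f_mᵀK_m^{-1}f_m/d_m equals (1/2) yᵀ (σ²I_N + ∑_m d_m K_m)^{-1} y. -/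
/-!
For positive definite `A` and `t > 0`, the form `f ↦ fᵀA⁻¹f / t` lies above its tangent bound
`2 cᵀf − t cᵀAc`, with equality at `f = t A c`. Take `c = a := S⁻¹y` with
`S = σ²I + ∑ₘ dₘKₘ`, and apply this to each kernel (`A = Kₘ`, `t = dₘ`) and to the noise
(`A = I`, `t = σ²`, `f = y − ∑ₘ fₘ`). The bounds add up to `2 aᵀy − aᵀSa = aᵀy`, and all are
attained at `fₘ = dₘKₘa`, where the residual is `σ²a`.
-/

open Matrix

namespace Matrix

lemma posDef_smul_one_add_sum_smul {n ι : Type*} [DecidableEq n] [Fintype ι]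
    {K : ι → Matrix n n ℝ} (hK : ∀ i, (K i).PosDef) {s : ℝ} (hs : 0 < s) {d : ι → ℝ}
    (hd : ∀ i, 0 ≤ d i) : (s • 1 + ∑ i, d i • K i).PosDef :=
  (PosDef.one.smul hs).add_posSemidef
    (posSemidef_sum _ fun i _ => (hK i).posSemidef.smul (hd i))

variable {n ι : Type*} [Fintype n] [DecidableEq n] [Fintype ι]

lemma inv_mulVec_mulVec_cancel {A : Matrix n n ℝ} (hA : IsUnit A) (v : n → ℝ) :
    A⁻¹ *ᵥ (A *ᵥ v) = v := by
  rw [mulVec_mulVec, nonsing_inv_mul A ((isUnit_iff_isUnit_det A).mp hA), one_mulVec]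

lemma mulVec_inv_mulVec_cancel {A : Matrix n n ℝ} (hA : IsUnit A) (v : n → ℝ) :
    A *ᵥ (A⁻¹ *ᵥ v) = v := by
  rw [mulVec_mulVec, mul_nonsing_inv A ((isUnit_iff_isUnit_det A).mp hA), one_mulVec]

/-- Expand `0 ≤ (f - t A c)ᵀ A⁻¹ (f - t A c)`. -/
lemma PosDef.two_mul_dotProduct_sub_le {A : Matrix n n ℝ} (hA : A.PosDef) {t : ℝ} (ht : 0 < t)
    (c f : n → ℝ) :
    2 * (c ⬝ᵥ f) - t * (c ⬝ᵥ (A *ᵥ c)) ≤ f ⬝ᵥ (A⁻¹ *ᵥ f) / t := by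
  have hsymm : ∀ u v : n → ℝ, (A *ᵥ u) ⬝ᵥ v = u ⬝ᵥ (A *ᵥ v) := fun u v => by
    rw [dotProduct_mulVec, ← mulVec_transpose, show Aᵀ = A from hA.1]
  have h := hA.inv.posSemidef.dotProduct_mulVec_nonneg (f - t • (A *ᵥ c))
  rw [star_trivial, mulVec_sub, mulVec_smul, inv_mulVec_mulVec_cancel hA.isUnit] at h
  simp only [dotProduct_sub, sub_dotProduct, dotProduct_smul, smul_dotProduct, smul_eq_mul,
    hsymm, mulVec_inv_mulVec_cancel hA.isUnit] at h
  rw [le_div_iff₀ ht]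
  nlinarith [dotProduct_comm c f]

lemma dotProduct_inv_mulVec_smul_mulVec {A : Matrix n n ℝ} (hA : IsUnit A) (t : ℝ) (c : n → ℝ) :
    (t • (A *ᵥ c)) ⬝ᵥ (A⁻¹ *ᵥ (t • (A *ᵥ c))) = t ^ 2 * (c ⬝ᵥ (A *ᵥ c)) := by
  rw [mulVec_smul, inv_mulVec_mulVec_cancel hA, smul_dotProduct, dotProduct_smul,
    dotProduct_comm, smul_eq_mul, smul_eq_mul]
  ring

lemma dotProduct_smul_one_add_sum_smul_mulVec (K : ι → Matrix n n ℝ) (s : ℝ) (d : ι → ℝ)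
    (a : n → ℝ) :
    a ⬝ᵥ ((s • 1 + ∑ i, d i • K i) *ᵥ a) = s * (a ⬝ᵥ a) + ∑ i, d i * (a ⬝ᵥ (K i *ᵥ a)) := by
  simp only [add_mulVec, sum_mulVec, smul_mulVec, one_mulVec, dotProduct_add, dotProduct_sum,
    dotProduct_smul, smul_eq_mul]

end Matrix

section VariationalObjective

variable {n ι : Type*} [Fintype n] [DecidableEq n] [Fintype ι]

noncomputable def variationalObjective (K : ι → Matrix n n ℝ) (σ : ℝ) (y : n → ℝ) (d : ι → ℝ)
    (f : ι → n → ℝ) : ℝ :=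
  1 / (2 * σ ^ 2) * ((y - ∑ i, f i) ⬝ᵥ (y - ∑ i, f i))
    + 1 / 2 * ∑ i, (f i) ⬝ᵥ ((K i)⁻¹ *ᵥ f i) / d i

variable {K : ι → Matrix n n ℝ} {σ : ℝ} {y : n → ℝ} {d : ι → ℝ} {a : n → ℝ}

lemma variationalObjective_smul_mulVec (hK : ∀ i, IsUnit (K i))
    (hd : ∀ i, d i ≠ 0) (ha : (σ ^ 2 • 1 + ∑ i, d i • K i) *ᵥ a = y) :
    variationalObjective K σ y d (fun i => d i • (K i *ᵥ a)) = 1 / 2 * (a ⬝ᵥ y) := by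
  have hres : y - ∑ i, d i • (K i *ᵥ a) = σ ^ 2 • a := by
    simp only [← ha, add_mulVec, sum_mulVec, smul_mulVec, one_mulVec, add_sub_cancel_right]
  have hreg : ∀ i, (d i • (K i *ᵥ a)) ⬝ᵥ ((K i)⁻¹ *ᵥ (d i • (K i *ᵥ a))) / d i
      = d i * (a ⬝ᵥ (K i *ᵥ a)) := fun i => by
    rw [dotProduct_inv_mulVec_smul_mulVec (hK i)]
    field_simp [hd i]
  rw [variationalObjective, hres, Finset.sum_congr rfl fun i _ => hreg i, ← ha,
    dotProduct_smul_one_add_sum_smul_mulVec, dotProduct_smul, smul_dotProduct, smul_eq_mul,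
    smul_eq_mul]
  field_simp

lemma le_variationalObjective (hK : ∀ i, (K i).PosDef) (hσ : 0 < σ) (hd : ∀ i, 0 < d i)
    (ha : (σ ^ 2 • 1 + ∑ i, d i • K i) *ᵥ a = y) (f : ι → n → ℝ) :
    1 / 2 * (a ⬝ᵥ y) ≤ variationalObjective K σ y d f := by
  have hdata := PosDef.one.two_mul_dotProduct_sub_le (pow_pos hσ 2) a (y - ∑ i, f i)
  have hreg := Finset.sum_le_sum fun i (_ : i ∈ Finset.univ) =>
    (hK i).two_mul_dotProduct_sub_le (hd i) a (f i)
  rw [inv_one, one_mulVec, one_mulVec, dotProduct_sub] at hdata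
  rw [Finset.sum_sub_distrib, ← Finset.mul_sum, ← dotProduct_sum] at hreg
  have hquad := dotProduct_smul_one_add_sum_smul_mulVec K (σ ^ 2) d a
  rw [ha] at hquad
  have hscale : ∀ x : ℝ, 1 / (2 * σ ^ 2) * x = x / σ ^ 2 / 2 := fun x => by ring
  rw [variationalObjective, hscale]
  linarith

end VariationalObjective

/-- Quadratic variational representation of the Gaussian marginal likelihood data term:
`min_f (1/(2σ²))‖y − ∑ₘ fₘ‖² + (1/2)∑ₘ fₘᵀKₘ⁻¹fₘ/dₘ = (1/2) yᵀ(σ²I + ∑ₘ dₘKₘ)⁻¹ y`. -/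
theorem stmt16 (N M : ℕ) (K : Fin M → Matrix (Fin N) (Fin N) ℝ)
    (hK : ∀ m, (K m).PosDef) (σ : ℝ) (hσ : 0 < σ) (y : Fin N → ℝ)
    (d : Fin M → ℝ) (hd : ∀ m, 0 < d m) :
    IsLeast {z : ℝ | ∃ f : Fin M → (Fin N → ℝ),
        z = 1 / (2 * σ ^ 2) * ((y - ∑ m, f m) ⬝ᵥ (y - ∑ m, f m))
          + 1 / 2 * ∑ m, (f m) ⬝ᵥ ((K m)⁻¹ *ᵥ f m) / d m}
      (1 / 2 * (y ⬝ᵥ ((σ ^ 2 • (1 : Matrix (Fin N) (Fin N) ℝ)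
          + ∑ m, d m • K m)⁻¹ *ᵥ y))) := by
  set S := σ ^ 2 • (1 : Matrix (Fin N) (Fin N) ℝ) + ∑ m, d m • K m
  have hS : S.PosDef := posDef_smul_one_add_sum_smul hK (pow_pos hσ 2) fun m => (hd m).le
  have ha : S *ᵥ (S⁻¹ *ᵥ y) = y := mulVec_inv_mulVec_cancel hS.isUnit y
  rw [dotProduct_comm]
  refine ⟨⟨_, (variationalObjective_smul_mulVec (fun m => (hK m).isUnit)
    (fun m => (hd m).ne') ha).symm⟩, ?_⟩
  rintro _ ⟨f, rfl⟩
  exact le_variationalObjective hK hσ hd ha f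
end
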